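/- Let Γ be a finite simple edge-labeled graph, let e = {s,t} be an edge of Γ whose label m satisfies m > 2, and let U be a subset of the vertex set V that spans a clique in Γ and contains both s and t. Let τ ∈ A_Γ be the image of the alternating word sts⋯s of length m if m is odd, and of length m+1 if m is even. Then there is no element g of the subgroup A_{U∖{s}} of A_Γ generated by U∖{s} such that g⁻¹τ lies in the subgroup A_{U∖{t}} generated by U∖{t} (i.e., g·A_{U∖{t}} = τ·A_{U∖{t}} is impossible); and likewise there is no element g of A_{U∖{t}} such that g⁻¹τ lies in A_{U∖{s}}. -/

import Mathlib

/-- The alternating product `x y x y ⋯` of length `m`. -/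
def altElt {M : Type*} [Monoid M] (x y : M) (m : ℕ) : M :=
  ((List.range m).map (fun i => if i % 2 = 0 then x else y)).prod

/-- The Artin relations of an edge-labeled graph: for each edge `{s,t}` with label
`μ s t = m`, the relation `Π(s,t;m) = Π(t,s;m)`. -/
def artinRels {V : Type*} (G : SimpleGraph V) (μ : V → V → ℕ) : Set (FreeGroup V) :=
  {r | ∃ s t : V, G.Adj s t ∧
    r = altElt (FreeGroup.of s) (FreeGroup.of t) (μ s t) *
        (altElt (FreeGroup.of t) (FreeGroup.of s) (μ s t))⁻¹}

/-- The Artin group of an edge-labeled graph. -/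
abbrev ArtinGroup {V : Type*} (G : SimpleGraph V) (μ : V → V → ℕ) :=
  PresentedGroup (artinRels G μ)

/-- A simple graph is a cone if it has at least two vertices and some vertex is
adjacent to every other vertex. -/
def SimpleGraph.IsCone {V : Type*} (G : SimpleGraph V) : Prop :=
  (∃ v w : V, v ≠ w) ∧ ∃ v₀ : V, ∀ w, w ≠ v₀ → G.Adj v₀ w

/-!
Put `m = μ s t`. The Artin group acts on `ℝ^(V) ⊕ ℝ^(V)` by the reflections
`σ_v x = x - f_v(x) α_v`, where `f_v(α_w) = -2 cos (π / μ v w)` as in the Tits representation,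
and `f_v` moreover reads off the `v`-th coordinate of the second summand; this extra summand
provides vectors `ϖ_t` with `f_v(ϖ_t) = δ_{vt}`. Every element of `A_{U∖{t}}` fixes `ϖ_t`, and
every element of `A_{U∖{s}}` preserves the `α_s`-coordinate, so if `g⁻¹ τ ∈ A_{U∖{t}}` for some
`g ∈ A_{U∖{s}}` then the `α_s`-coordinate of `τ ϖ_t` vanishes. On the other hand `τ` is an
alternating word of odd length `2k + 1` with `1 ≤ k` and `k + 1 < m` (this is where `m > 2`
enters), and such a word in `σ_s, σ_t` acts as the reflection
`x ↦ x - (S_k f_s(x) + S_{k-1} f_t(x)) (S_k α_s + S_{k-1} α_t)`, where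
`S_j = sin ((j + 1) π / m) / sin (π / m)` are Chebyshev values. Hence that coordinate is
`-S_k S_{k-1} ≠ 0`. Exchanging the roles of `s` and `t` gives the second half.
-/

open Polynomial Polynomial.Chebyshev Module Real

theorem altElt_succ {M : Type*} [Monoid M] (x y : M) (n : ℕ) :
    altElt x y (n + 1) = x * altElt y x n := by
  simp only [altElt, List.range_succ_eq_map, List.map_cons, List.prod_cons, List.map_map]
  congr 2
  refine List.map_congr_left fun i _ => ?_
  rcases Nat.mod_two_eq_zero_or_one i with h | h <;>
    simp [Function.comp_apply, Nat.succ_mod_two_eq_zero_iff, h]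

theorem map_altElt {M N : Type*} [Monoid M] [Monoid N] (F : M →* N) (x y : M) (n : ℕ) :
    F (altElt x y n) = altElt (F x) (F y) n := by
  induction n generalizing x y with
  | zero => exact map_one F
  | succ n ih => rw [altElt_succ, altElt_succ, map_mul, ih]

theorem S_eval_sq_add_S_eval_sq {R : Type*} [CommRing R] (t : R) (k : ℤ) :
    (S R (k - 1)).eval t ^ 2 + (S R k).eval t ^ 2
      - t * (S R (k - 1)).eval t * (S R k).eval t = 1 := by
  simpa using congrArg (eval t) (S_sq_add_S_sq R (k - 1))

section Dihedral

variable {R M : Type*} [CommRing R] [AddCommGroup M] [Module R M] {a b : M} {fa fb : Dual R M}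
  (ha : fa a = 2) (hb : fb b = 2) {t : R} (hab : fa b = -t) (hba : fb a = -t)

include hab hba in
theorem altElt_reflection_odd_apply (k : ℕ) (x : M) :
    altElt (reflection ha) (reflection hb) (2 * k + 1) x =
      x - ((S R k).eval t * fa x + (S R (k - 1)).eval t * fb x) •
        ((S R k).eval t • a + (S R (k - 1)).eval t • b) := by
  induction k with
  | zero => simp [altElt, reflection_apply]
  | succ k ih =>
    have hrec : (S R (k + 1)).eval t = t * (S R k).eval t - (S R (k - 1)).eval t := by
      simp [S_add_one]
    rw [show 2 * (k + 1) + 1 = 2 * k + 1 + 1 + 1 by ring, altElt_succ, altElt_succ,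
      LinearEquiv.mul_apply, LinearEquiv.mul_apply, ih]
    simp only [reflection_apply, map_add, map_sub, map_smul, ha, hb, hab, hba]
    push_cast
    rw [add_sub_cancel_right, hrec]
    match_scalars
    · ring
    · linear_combination (fa x + t * fb x) * S_eval_sq_add_S_eval_sq t k
    · linear_combination fb x * S_eval_sq_add_S_eval_sq t k

include hab hba in
theorem altElt_reflection_braid_odd {k : ℕ} (hS : (S R k).eval t = (S R (k - 1)).eval t) :
    altElt (reflection ha) (reflection hb) (2 * k + 1) =
      altElt (reflection hb) (reflection ha) (2 * k + 1) := by
  ext x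
  rw [altElt_reflection_odd_apply ha hb hab hba, altElt_reflection_odd_apply hb ha hba hab, hS]
  module

include hab hba in
theorem altElt_reflection_braid_even {k : ℕ}
    (hS : (S R (k + 1)).eval t = (S R (k - 1)).eval t) :
    altElt (reflection ha) (reflection hb) (2 * k + 2) =
      altElt (reflection hb) (reflection ha) (2 * k + 2) := by
  have hrec : t * (S R k).eval t = 2 * (S R (k - 1)).eval t := by
    have := congrArg (eval t) (S_add_one R (k : ℤ))
    simp only [eval_sub, eval_mul, eval_X] at this
    linear_combination hS - this
  ext x
  rw [show 2 * k + 2 = 2 * k + 1 + 1 from rfl, altElt_succ _ _ (2 * k + 1),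
    altElt_succ _ _ (2 * k + 1), LinearEquiv.mul_apply, LinearEquiv.mul_apply,
    altElt_reflection_odd_apply ha hb hab hba, altElt_reflection_odd_apply hb ha hba hab]
  simp only [reflection_apply, map_add, map_sub, map_smul, ha, hb, hab, hba]
  match_scalars
  · rfl
  · linear_combination fa x * S_eval_sq_add_S_eval_sq t k - fb x * (S R k).eval t * hrec
  · linear_combination -fb x * S_eval_sq_add_S_eval_sq t k + fa x * (S R k).eval t * hrec

end Dihedral

theorem S_eval_two_mul_cos_pi_div_symm {m : ℕ} (hm : 2 ≤ m) (j : ℤ) :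
    (S ℝ j).eval (2 * cos (π / m)) = (S ℝ (m - 2 - j)).eval (2 * cos (π / m)) := by
  have hsin : sin (π / m) ≠ 0 := by
    refine (sin_pos_of_pos_of_lt_pi (by positivity) ?_).ne'
    rw [div_lt_iff₀ (by positivity)]
    have : (2 : ℝ) ≤ m := by exact_mod_cast hm
    nlinarith [pi_pos]
  refine mul_right_cancel₀ hsin ?_
  rw [S_two_mul_real_cos, S_two_mul_real_cos, ← sin_pi_sub]
  congr 1
  push_cast
  field_simp
  ring

theorem S_eval_two_mul_cos_pi_div_ne_zero {m : ℕ} {j : ℤ} (hj₀ : 0 ≤ j) (hj : j + 1 < m) :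
    (S ℝ j).eval (2 * cos (π / m)) ≠ 0 := by
  have hj₀' : (0 : ℝ) ≤ j := by exact_mod_cast hj₀
  have hj' : (j : ℝ) + 1 < m := by exact_mod_cast hj
  have hpos : 0 < sin ((j + 1) * (π / m)) := by
    refine sin_pos_of_pos_of_lt_pi (mul_pos (by linarith) (div_pos pi_pos (by linarith))) ?_
    rw [mul_div_assoc', div_lt_iff₀ (by linarith)]
    nlinarith [pi_pos]
  rw [← S_two_mul_real_cos] at hpos
  exact left_ne_zero_of_mul hpos.ne'

theorem altElt_reflection_braid {M : Type*} [AddCommGroup M] [Module ℝ M] {a b : M}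
    {fa fb : Dual ℝ M} (ha : fa a = 2) (hb : fb b = 2) {m : ℕ} (hm : 2 ≤ m)
    (hab : fa b = -(2 * cos (π / m))) (hba : fb a = -(2 * cos (π / m))) :
    altElt (reflection ha) (reflection hb) m = altElt (reflection hb) (reflection ha) m := by
  obtain ⟨k, rfl | rfl⟩ : ∃ k, m = 2 * k + 1 ∨ m = 2 * k + 2 := ⟨(m - 1) / 2, by omega⟩
  · refine altElt_reflection_braid_odd ha hb hab hba ?_
    rw [S_eval_two_mul_cos_pi_div_symm hm]
    congr 2
    push_cast
    ring
  · refine altElt_reflection_braid_even ha hb hab hba ?_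
    rw [S_eval_two_mul_cos_pi_div_symm hm]
    congr 2
    push_cast
    ring

namespace ArtinGroup

variable {V : Type*}

section Lift

variable {G : SimpleGraph V} {μ : V → V → ℕ} {H : Type*} [Group H]

def lift (f : V → H)
    (hf : ∀ s t, G.Adj s t → altElt (f s) (f t) (μ s t) = altElt (f t) (f s) (μ s t)) :
    ArtinGroup G μ →* H :=
  PresentedGroup.toGroup (f := f) <| by
    rintro _ ⟨s, t, hst, rfl⟩
    rw [map_mul, map_inv, map_altElt, map_altElt, FreeGroup.lift_apply_of,
      FreeGroup.lift_apply_of, hf s t hst, mul_inv_cancel]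

theorem lift_of {f : V → H}
    {hf : ∀ s t, G.Adj s t → altElt (f s) (f t) (μ s t) = altElt (f t) (f s) (μ s t)} (v : V) :
    lift f hf (PresentedGroup.of v) = f v :=
  PresentedGroup.toGroup.of _

end Lift

abbrev ReflectionSpace (V : Type*) := (V →₀ ℝ) × (V →₀ ℝ)

noncomputable def root (v : V) : ReflectionSpace V := (Finsupp.single v 1, 0)

noncomputable def fundamentalWeight (v : V) : ReflectionSpace V := (0, Finsupp.single v 1)

section Coroot

variable (μ : V → V → ℕ)

-- For `w ≠ v` not adjacent to `v` the value is irrelevant: `A_Γ` imposes no relation there.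
open Classical in
noncomputable def coroot (v : V) : Dual ℝ (ReflectionSpace V) :=
  Finsupp.linearCombination ℝ (fun w => if w = v then 2 else -(2 * cos (π / μ v w))) ∘ₗ
      LinearMap.fst ℝ _ _ +
    Finsupp.lapply v ∘ₗ LinearMap.snd ℝ _ _

theorem coroot_root_self (v : V) : coroot μ v (root v) = 2 := by
  simp [coroot, root]

theorem coroot_root_of_ne {v w : V} (h : v ≠ w) :
    coroot μ v (root w) = -(2 * cos (π / μ v w)) := by
  simp [coroot, root, Ne.symm h]

theorem coroot_fundamentalWeight (v w : V) :
    coroot μ v (fundamentalWeight w) = Finsupp.single w 1 v := by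
  simp [coroot, fundamentalWeight]

end Coroot

section Representation

variable {G : SimpleGraph V} {μ : V → V → ℕ}
  (hμsymm : ∀ s t : V, μ s t = μ t s) (hμ2 : ∀ s t : V, G.Adj s t → 2 ≤ μ s t)

noncomputable def reflectionRep : ArtinGroup G μ →* (ReflectionSpace V ≃ₗ[ℝ] ReflectionSpace V) :=
  lift (fun v => reflection (coroot_root_self μ v)) fun s t hst =>
    altElt_reflection_braid _ _ (hμ2 s t hst) (coroot_root_of_ne μ hst.ne)
      (by rw [coroot_root_of_ne μ hst.ne.symm, hμsymm])

theorem reflectionRep_of (v : V) :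
    reflectionRep hμsymm hμ2 (PresentedGroup.of v) = reflection (coroot_root_self μ v) :=
  lift_of v

theorem reflectionRep_apply_fst_of_mem_closure {S : Set V} {s : V} (hs : s ∉ S)
    {g : ArtinGroup G μ} (hg : g ∈ Subgroup.closure ((fun v => PresentedGroup.of v) '' S))
    (x : ReflectionSpace V) : (reflectionRep hμsymm hμ2 g x).1 s = x.1 s := by
  induction hg using Subgroup.closure_induction generalizing x with
  | mem _ hv =>
    obtain ⟨v, hv, rfl⟩ := hv
    have hvs : v ≠ s := fun h => hs (h ▸ hv)
    simp [reflectionRep_of, reflection_apply, root, hvs]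
  | one => rfl
  | mul g h _ _ ihg ihh => rw [map_mul, LinearEquiv.mul_apply, ihg, ihh]
  | inv g _ ih =>
    rw [← ih, ← LinearEquiv.mul_apply, ← map_mul, mul_inv_cancel, map_one]
    rfl

theorem reflectionRep_fundamentalWeight_of_mem_closure {T : Set V} {t : V} (ht : t ∉ T)
    {g : ArtinGroup G μ} (hg : g ∈ Subgroup.closure ((fun v => PresentedGroup.of v) '' T)) :
    reflectionRep hμsymm hμ2 g (fundamentalWeight t) = fundamentalWeight t := by
  suffices Subgroup.closure ((fun v => PresentedGroup.of v) '' T) ≤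
      (MulAction.stabilizer _ (fundamentalWeight t)).comap (reflectionRep hμsymm hμ2) from
    this hg
  rw [Subgroup.closure_le]
  rintro _ ⟨v, hv, rfl⟩
  have hvt : v ≠ t := fun h => ht (h ▸ hv)
  simp [MulAction.mem_stabilizer_iff, LinearEquiv.smul_def, reflectionRep_of, reflection_apply,
    coroot_fundamentalWeight, Finsupp.single_eq_of_ne hvt]

theorem not_exists_mul_mem_closure {S T : Set V} {s t : V} (hs : s ∉ S) (ht : t ∉ T)
    {τ : ArtinGroup G μ} (hτ : (reflectionRep hμsymm hμ2 τ (fundamentalWeight t)).1 s ≠ 0) :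
    ¬ ∃ g ∈ Subgroup.closure ((fun v => PresentedGroup.of v) '' S),
      g⁻¹ * τ ∈ Subgroup.closure ((fun v => PresentedGroup.of v) '' T) := by
  rintro ⟨g, hg, hgτ⟩
  apply hτ
  calc (reflectionRep hμsymm hμ2 τ (fundamentalWeight t)).1 s
      = (reflectionRep hμsymm hμ2 g
          (reflectionRep hμsymm hμ2 (g⁻¹ * τ) (fundamentalWeight t))).1 s := by
        rw [← LinearEquiv.mul_apply, ← map_mul, mul_inv_cancel_left]
    _ = 0 := by
        rw [reflectionRep_fundamentalWeight_of_mem_closure hμsymm hμ2 ht hgτ,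
          reflectionRep_apply_fst_of_mem_closure hμsymm hμ2 hs hg]
        rfl

theorem reflectionRep_altElt_fundamentalWeight {s t : V} (hst : s ≠ t) (k : ℕ) :
    let c := 2 * cos (π / μ s t)
    let τ := altElt (PresentedGroup.of s : ArtinGroup G μ) (PresentedGroup.of t) (2 * k + 1)
    (reflectionRep hμsymm hμ2 τ (fundamentalWeight t)).1 s =
        -((S ℝ k).eval c * (S ℝ (k - 1)).eval c) ∧
      (reflectionRep hμsymm hμ2 τ (fundamentalWeight s)).1 t =
        -((S ℝ k).eval c * (S ℝ (k - 1)).eval c) := by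
  have hts : coroot μ t (root s) = -(2 * cos (π / μ s t)) := by
    rw [coroot_root_of_ne μ hst.symm, hμsymm]
  simp only [map_altElt, reflectionRep_of,
    altElt_reflection_odd_apply _ _ (coroot_root_of_ne μ hst) hts]
  simp only [coroot_fundamentalWeight]
  simp [root, fundamentalWeight, hst, hst.symm, mul_comm]

end Representation

end ArtinGroup

open ArtinGroup

theorem artin_twist_lemma_general
    {V : Type*} (G : SimpleGraph V) (μ : V → V → ℕ)
    (hμsymm : ∀ s t : V, μ s t = μ t s)
    (hμ2 : ∀ s t : V, G.Adj s t → 2 ≤ μ s t)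
    (s t : V) (hadj : G.Adj s t) (hm : 2 < μ s t)
    (U : Set V)
    (τ : ArtinGroup G μ)
    (hτ : τ = altElt (PresentedGroup.of s : ArtinGroup G μ) (PresentedGroup.of t)
      (if Odd (μ s t) then μ s t else μ s t + 1)) :
    (¬ ∃ g ∈ Subgroup.closure
        ((fun v => (PresentedGroup.of v : ArtinGroup G μ)) '' (U \ {s})),
        g⁻¹ * τ ∈ Subgroup.closure
          ((fun v => (PresentedGroup.of v : ArtinGroup G μ)) '' (U \ {t}))) ∧
      (¬ ∃ g ∈ Subgroup.closure
        ((fun v => (PresentedGroup.of v : ArtinGroup G μ)) '' (U \ {t})),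
        g⁻¹ * τ ∈ Subgroup.closure
          ((fun v => (PresentedGroup.of v : ArtinGroup G μ)) '' (U \ {s}))) := by
  obtain ⟨k, hlen, hk, hkm⟩ : ∃ k : ℕ,
      (if Odd (μ s t) then μ s t else μ s t + 1) = 2 * k + 1 ∧ 1 ≤ k ∧ k + 1 < μ s t := by
    split_ifs with h
    · obtain ⟨k, hk⟩ := h
      exact ⟨k, hk, by omega, by omega⟩
    · obtain ⟨k, hk⟩ := Nat.not_odd_iff_even.mp h
      exact ⟨k, by omega, by omega, by omega⟩
  have hS : (S ℝ k).eval (2 * cos (π / μ s t)) *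
      (S ℝ (k - 1)).eval (2 * cos (π / μ s t)) ≠ 0 :=
    mul_ne_zero (S_eval_two_mul_cos_pi_div_ne_zero (by omega) (by omega))
      (S_eval_two_mul_cos_pi_div_ne_zero (by omega) (by omega))
  obtain ⟨hcoord_s, hcoord_t⟩ := reflectionRep_altElt_fundamentalWeight hμsymm hμ2 hadj.ne k
  rw [hτ, hlen]
  exact ⟨not_exists_mul_mem_closure hμsymm hμ2 (fun h => h.2 rfl) (fun h => h.2 rfl)
      (by rw [hcoord_s]; exact neg_ne_zero.mpr hS),
    not_exists_mul_mem_closure hμsymm hμ2 (fun h => h.2 rfl) (fun h => h.2 rfl)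
      (by rw [hcoord_t]; exact neg_ne_zero.mpr hS)⟩

theorem artin_twist_lemma
    {V : Type*} [Fintype V] (G : SimpleGraph V) (μ : V → V → ℕ)
    (hμsymm : ∀ s t : V, μ s t = μ t s)
    (hμ2 : ∀ s t : V, G.Adj s t → 2 ≤ μ s t)
    (s t : V) (hadj : G.Adj s t) (hm : 2 < μ s t)
    (U : Set V) (hclique : ∀ u ∈ U, ∀ v ∈ U, u ≠ v → G.Adj u v)
    (hs : s ∈ U) (ht : t ∈ U)
    (τ : ArtinGroup G μ)
    (hτ : τ = altElt (PresentedGroup.of s : ArtinGroup G μ) (PresentedGroup.of t)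
      (if Odd (μ s t) then μ s t else μ s t + 1)) :
    (¬ ∃ g ∈ Subgroup.closure
        ((fun v => (PresentedGroup.of v : ArtinGroup G μ)) '' (U \ {s})),
        g⁻¹ * τ ∈ Subgroup.closure
          ((fun v => (PresentedGroup.of v : ArtinGroup G μ)) '' (U \ {t}))) ∧
      (¬ ∃ g ∈ Subgroup.closure
        ((fun v => (PresentedGroup.of v : ArtinGroup G μ)) '' (U \ {t})),
        g⁻¹ * τ ∈ Subgroup.closure
          ((fun v => (PresentedGroup.of v : ArtinGroup G μ)) '' (U \ {s}))) :=
  artin_twist_lemma_general G μ hμsymm hμ2 s t hadj hm U τ hτ
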